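/- Let p ≥ 5 be a prime and let G = ⟨a,b,c,d | [c,a], [c,b], [d,a], [d,b], [d,c]⟩ be the class-2 exponent-p group on four generators with those five relations (group 5.4.1, of order p^5). Then the number of conjugacy classes of G is p^4 + p^3 − p^2, and the automorphism group of G has order (p^2 − 1)^2(p^2 − p)^2 p^8. -/

import Mathlib

/-
Writing `z = ⁅x₁, x₀⁆`, the generators `x₂, x₃` and `z` are central and
`x₁ ^ j * x₀ ^ i = x₀ ^ i * x₁ ^ j * z ^ (j * i)`, so every element of `G` has the form
`x₀ ^ a * x₁ ^ b * x₂ ^ c * x₃ ^ d * z ^ e`. Since the coordinate group `M(𝔽_p)` (Heisenberg group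
times `𝔽_p²`) is a class-two group of exponent `p` satisfying the relations, this gives
`G ≅ M(𝔽_p)`, of order `p⁵`.

Two elements of `M` commute iff their `(a, b)`-parts are linearly dependent, so `M` has
`p⁶ (p⁴ - |GL₂(𝔽_p)|)` commuting pairs, and `k(G) = p (p⁴ - |GL₂(𝔽_p)|) = p⁴ + p³ - p²`.

An endomorphism of `M` is determined by the images `A, B, C, D` of the generators, and any choice
with `C, D` central is allowed. It is an automorphism iff the `(a, b)`-parts of `A, B` and the
`(c, d)`-parts of `C, D` form invertible matrices; the remaining eight coordinates are free, so
`|Aut G| = |GL₂(𝔽_p)|² p⁸`.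
-/

/-- The commutator `u⁻¹v⁻¹uv`. -/
def fgComm {α : Type} (u v : FreeGroup α) : FreeGroup α := u⁻¹ * v⁻¹ * u * v

/-- The relator set for the largest class-2 exponent-`p` group on `n` generators
satisfying the extra relations `R`: we add all `p`-th powers and all triple commutators. -/
def classTwoRels (p n : ℕ) (R : Set (FreeGroup (Fin n))) : Set (FreeGroup (Fin n)) :=
  R ∪ (Set.range fun w : FreeGroup (Fin n) => w ^ p) ∪
    {x | ∃ u v w : FreeGroup (Fin n), x = fgComm (fgComm u v) w}

/-- The largest class-2 exponent-`p` group on `n` generators satisfying the relations `R`. -/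
def ClassTwoGroup (p n : ℕ) (R : Set (FreeGroup (Fin n))) : Type :=
  PresentedGroup (classTwoRels p n R)

instance (p n : ℕ) (R : Set (FreeGroup (Fin n))) : Group (ClassTwoGroup p n R) := by
  unfold ClassTwoGroup; infer_instance

/-- `H` is a class-3 descendant of `G` of order `p^9` with exponent `p`. -/
def IsClass3Descendant (p : ℕ) (G : Type) [Group G] (H : Type) [Group H] : Prop :=
  Nat.card H = p ^ 9 ∧ Monoid.exponent H = p ∧
    Subgroup.lowerCentralSeries (⊤ : Subgroup H) 3 = ⊥ ∧ Subgroup.lowerCentralSeries (⊤ : Subgroup H) 2 ≠ ⊥ ∧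
    Nonempty ((H ⧸ Subgroup.lowerCentralSeries (⊤ : Subgroup H) 2) ≃* G)

/-- The multiplication underlying a group structure. -/
def mulOfGroup {α : Type} (g : Group α) : Mul α := by letI := g; infer_instance

/-- `P` has exactly `k` isomorphism classes of groups satisfying it. -/
def IsIsoClassCount (P : (H : Type) → Group H → Prop) (k : ℕ) : Prop :=
  ∃ (H : Fin k → Type) (inst : (i : Fin k) → Group (H i)),
    (∀ i, P (H i) (inst i)) ∧
    (∀ i j : Fin k, i ≠ j →
      ¬ Nonempty (@MulEquiv (H i) (H j) (mulOfGroup (inst i)) (mulOfGroup (inst j)))) ∧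
    (∀ (K : Type) (instK : Group K), P K instK →
      ∃ i, Nonempty (@MulEquiv K (H i) (mulOfGroup instK) (mulOfGroup (inst i))))

/-- `G` has exactly `k` class-3 descendants of order `p^9` with exponent `p`,
up to isomorphism. -/
def DescendantCount (p : ℕ) (G : Type) [Group G] (k : ℕ) : Prop :=
  IsIsoClassCount (fun H inst => @IsClass3Descendant p G _ H inst) k

open scoped commutatorElement

lemma pow_mul_pow_eq_of_mul_eq {G : Type*} [Group G] {x y z : G} (hz : z ∈ Subgroup.center G)
    (h : y * x = x * y * z) (i j : ℕ) : y ^ j * x ^ i = x ^ i * y ^ j * z ^ (j * i) := by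
  have hz' : ∀ (k : ℕ) (g : G), g * z ^ k = z ^ k * g := fun k g =>
    Subgroup.mem_center_iff.1 (Subgroup.pow_mem _ hz k) g
  have hyx : y * x ^ i = x ^ i * y * z ^ i := by
    induction i with
    | zero => simp
    | succ i ih =>
      rw [pow_succ, ← mul_assoc, ih, mul_assoc _ (z ^ i), ← hz', ← mul_assoc, mul_assoc (x ^ i) y,
        h]
      group
  induction j with
  | zero => simp
  | succ j ih =>
    rw [pow_succ', mul_assoc, ih, ← mul_assoc, ← mul_assoc, hyx, mul_assoc (x ^ i * y), ← hz',
      Nat.succ_mul, pow_add]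
    group

lemma MulEquiv.natCard_conjClasses_eq {G H : Type*} [Group G] [Group H] (e : G ≃* H) :
    Nat.card (ConjClasses G) = Nat.card (ConjClasses H) :=
  Nat.card_congr <| Quotient.congr e.toEquiv fun a b => by
    change IsConj a b ↔ IsConj (e a) (e b)
    exact ⟨e.toMonoidHom.map_isConj, fun h => by simpa using e.symm.toMonoidHom.map_isConj h⟩

lemma eq_zero_of_mul_add_mul_eq_zero {R : Type*} [CommRing R] [NoZeroDivisors R]
    {a b c d s t : R} (hdet : a * d - b * c ≠ 0) (h1 : s * a + t * c = 0) (h2 : s * b + t * d = 0) :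
    s = 0 ∧ t = 0 :=
  ⟨(mul_eq_zero.1 (by linear_combination d * h1 - c * h2 : s * (a * d - b * c) = 0)).resolve_right
      hdet,
    (mul_eq_zero.1 (by linear_combination a * h2 - b * h1 : t * (a * d - b * c) = 0)).resolve_right
      hdet⟩

lemma det_ne_zero_of_mul_add_mul_eq {R : Type*} [CommRing R] [Nontrivial R] {a b c d s t s' t' : R}
    (h1 : s * a + t * c = 1) (h2 : s' * a + t' * c = 0) (h3 : s' * b + t' * d = 1) :
    a * d - b * c ≠ 0 := by
  intro h
  apply one_ne_zero (α := R)
  linear_combination (s * b + t * d) * h2 - (s' * b + t' * d) * h1 - h3 + (s * t' - t * s') * h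

def Matrix.GeneralLinearGroup.equivDetNeZero (n F : Type*) [Fintype n] [DecidableEq n] [Field F] :
    GL n F ≃ {M : Matrix n n F // M.det ≠ 0} where
  toFun g := ⟨g, g.det_ne_zero⟩
  invFun M := .mkOfDetNeZero M.1 M.2
  left_inv _ := Matrix.GeneralLinearGroup.ext fun _ _ => rfl
  right_inv _ := rfl

lemma Matrix.card_GL_fin_two {F : Type*} [Field F] [Fintype F] :
    Nat.card (GL (Fin 2) F) = (Nat.card F ^ 2 - 1) * (Nat.card F ^ 2 - Nat.card F) := by
  simp [Matrix.card_GL_field, Fin.prod_univ_two, Nat.card_eq_fintype_card]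

namespace ClassTwoGroup

variable {p n : ℕ} {R : Set (FreeGroup (Fin n))}

def of (i : Fin n) : ClassTwoGroup p n R := PresentedGroup.of i

def mk : FreeGroup (Fin n) →* ClassTwoGroup p n R := PresentedGroup.mk _

lemma mk_surjective : Function.Surjective (mk : FreeGroup (Fin n) → ClassTwoGroup p n R) :=
  PresentedGroup.mk_surjective _

lemma closure_range_of : Subgroup.closure (Set.range (of : Fin n → ClassTwoGroup p n R)) = ⊤ :=
  PresentedGroup.closure_range_of _

lemma map_fgComm {α : Type} {G : Type*} [Group G] (f : FreeGroup α →* G) (u v : FreeGroup α) :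
    f (fgComm u v) = ⁅(f u)⁻¹, (f v)⁻¹⁆ := by
  simp [fgComm, commutatorElement_def]

lemma mk_eq_one {r : FreeGroup (Fin n)} (hr : r ∈ classTwoRels p n R) :
    (mk r : ClassTwoGroup p n R) = 1 :=
  PresentedGroup.one_of_mem hr

lemma pow_eq_one (g : ClassTwoGroup p n R) : g ^ p = 1 := by
  obtain ⟨w, rfl⟩ := mk_surjective g
  rw [← map_pow]
  exact mk_eq_one (Or.inl (Or.inr ⟨w, rfl⟩))

lemma commute_commutatorElement (u v w : ClassTwoGroup p n R) : Commute ⁅u, v⁆ w := by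
  obtain ⟨a, ha⟩ := mk_surjective u⁻¹
  obtain ⟨b, hb⟩ := mk_surjective v⁻¹
  obtain ⟨c, hc⟩ := mk_surjective w⁻¹
  have h := mk_eq_one (p := p) (R := R) (Or.inr ⟨a, b, c, rfl⟩)
  rw [map_fgComm, map_fgComm, commutatorElement_eq_one_iff_commute, ha, hb, hc] at h
  simpa using h.inv_left.inv_right

lemma commute_of_fgComm_mem {i j : Fin n} (h : fgComm (.of i) (.of j) ∈ R) :
    Commute (of i : ClassTwoGroup p n R) (of j) := by
  have h := mk_eq_one (p := p) (Or.inl (Or.inl h))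
  rw [map_fgComm, commutatorElement_eq_one_iff_commute] at h
  exact Commute.inv_inv_iff.1 h

lemma mem_center_of_forall_commute {i : Fin n}
    (h : ∀ j, Commute (of i : ClassTwoGroup p n R) (of j)) :
    (of i : ClassTwoGroup p n R) ∈ Subgroup.center (ClassTwoGroup p n R) := by
  refine Subgroup.mem_center_iff.2 fun g => ?_
  have hg : g ∈ Subgroup.centralizer {of i} :=
    PresentedGroup.generated_by _ _ (fun j => Subgroup.mem_centralizer_singleton_iff.2 (h j).symm) g
  exact Subgroup.mem_centralizer_singleton_iff.1 hg

lemma lift_rels {H : Type*} [Group H] (f : Fin n → H) (hpow : ∀ g : H, g ^ p = 1)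
    (hcomm : ∀ u v w : H, Commute ⁅u, v⁆ w) (hR : ∀ r ∈ R, FreeGroup.lift f r = 1) :
    ∀ r ∈ classTwoRels p n R, FreeGroup.lift f r = 1 := by
  rintro r ((hr | ⟨w, rfl⟩) | ⟨u, v, w, rfl⟩)
  · exact hR r hr
  · rw [map_pow, hpow]
  · rw [map_fgComm, map_fgComm, commutatorElement_eq_one_iff_commute]
    exact (hcomm _ _ _).inv_left.inv_right

def lift {H : Type*} [Group H] (f : Fin n → H) (hpow : ∀ g : H, g ^ p = 1)
    (hcomm : ∀ u v w : H, Commute ⁅u, v⁆ w) (hR : ∀ r ∈ R, FreeGroup.lift f r = 1) :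
    ClassTwoGroup p n R →* H :=
  PresentedGroup.toGroup (lift_rels f hpow hcomm hR)

@[simp]
lemma lift_of {H : Type*} [Group H] (f : Fin n → H) (hpow : ∀ g : H, g ^ p = 1)
    (hcomm : ∀ u v w : H, Commute ⁅u, v⁆ w) (hR : ∀ r ∈ R, FreeGroup.lift f r = 1) (i : Fin n) :
    lift f hpow hcomm hR (of i) = f i :=
  PresentedGroup.toGroup.of _

lemma hom_ext {H : Type*} [Group H] {f g : ClassTwoGroup p n R →* H}
    (h : ∀ i, f (of i) = g (of i)) : f = g :=
  PresentedGroup.ext h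

end ClassTwoGroup

namespace Group541

/-- The coordinates `(a, b, c, d, e)` stand for `x₀ ^ a * x₁ ^ b * x₂ ^ c * x₃ ^ d * z ^ e` with
`z = ⁅x₁, x₀⁆`. -/
@[ext]
structure Model (R : Type*) where
  a : R
  b : R
  c : R
  d : R
  e : R

namespace Model

def equivProd {R : Type*} : Model R ≃ R × R × R × R × R where
  toFun x := (x.a, x.b, x.c, x.d, x.e)
  invFun v := ⟨v.1, v.2.1, v.2.2.1, v.2.2.2.1, v.2.2.2.2⟩

lemma natCard_eq {R : Type*} : Nat.card (Model R) = Nat.card R ^ 5 := by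
  rw [Nat.card_congr equivProd]
  simp only [Nat.card_prod]
  ring

instance {R : Type*} [Finite R] : Finite (Model R) := Finite.of_equiv _ equivProd.symm

section CommRing

variable {R : Type*} [CommRing R]

instance : Mul (Model R) :=
  ⟨fun x y => ⟨x.a + y.a, x.b + y.b, x.c + y.c, x.d + y.d, x.e + y.e + x.b * y.a⟩⟩
instance : One (Model R) := ⟨⟨0, 0, 0, 0, 0⟩⟩
instance : Inv (Model R) := ⟨fun x => ⟨-x.a, -x.b, -x.c, -x.d, -x.e + x.b * x.a⟩⟩

@[simp] lemma mul_a (x y : Model R) : (x * y).a = x.a + y.a := rfl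
@[simp] lemma mul_b (x y : Model R) : (x * y).b = x.b + y.b := rfl
@[simp] lemma mul_c (x y : Model R) : (x * y).c = x.c + y.c := rfl
@[simp] lemma mul_d (x y : Model R) : (x * y).d = x.d + y.d := rfl
@[simp] lemma mul_e (x y : Model R) : (x * y).e = x.e + y.e + x.b * y.a := rfl
@[simp] lemma one_a : (1 : Model R).a = 0 := rfl
@[simp] lemma one_b : (1 : Model R).b = 0 := rfl
@[simp] lemma one_c : (1 : Model R).c = 0 := rfl
@[simp] lemma one_d : (1 : Model R).d = 0 := rfl
@[simp] lemma one_e : (1 : Model R).e = 0 := rfl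
@[simp] lemma inv_a (x : Model R) : x⁻¹.a = -x.a := rfl
@[simp] lemma inv_b (x : Model R) : x⁻¹.b = -x.b := rfl
@[simp] lemma inv_c (x : Model R) : x⁻¹.c = -x.c := rfl
@[simp] lemma inv_d (x : Model R) : x⁻¹.d = -x.d := rfl
@[simp] lemma inv_e (x : Model R) : x⁻¹.e = -x.e + x.b * x.a := rfl

instance : Group (Model R) where
  mul_assoc x y z := by ext <;> simp <;> ring
  one_mul x := by ext <;> simp
  mul_one x := by ext <;> simp
  inv_mul_cancel x := by ext <;> simp

lemma pow_eq (x : Model R) (n : ℕ) :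
    x ^ n = ⟨n * x.a, n * x.b, n * x.c, n * x.d, n * x.e + n.choose 2 * (x.b * x.a)⟩ := by
  induction n with
  | zero => ext <;> simp
  | succ n ih =>
    ext <;>
      simp only [pow_succ, ih, mul_a, mul_b, mul_c, mul_d, mul_e, Nat.cast_add, Nat.cast_one, add_mul,
        one_mul, Nat.choose_succ_succ', Nat.choose_one_right]
    ring

lemma commutatorElement_eq (x y : Model R) :
    ⁅x, y⁆ = ⟨0, 0, 0, 0, x.b * y.a - y.b * x.a⟩ := by
  ext <;>
    simp only [commutatorElement_def, mul_a, mul_b, mul_c, mul_d, mul_e, inv_a, inv_b, inv_c, inv_d,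
      inv_e, mul_neg, add_neg_cancel_comm, add_neg_cancel]
  ring

lemma commute_iff {x y : Model R} : Commute x y ↔ x.b * y.a = y.b * x.a := by
  rw [← commutatorElement_eq_one_iff_commute, commutatorElement_eq, Model.ext_iff]
  simp [sub_eq_zero]

lemma commute_commutatorElement (u v w : Model R) : Commute ⁅u, v⁆ w := by
  simp [commute_iff, commutatorElement_eq]

lemma mem_center_iff [Nontrivial R] {x : Model R} :
    x ∈ Subgroup.center (Model R) ↔ x.a = 0 ∧ x.b = 0 := by
  rw [Subgroup.mem_center_iff]
  refine ⟨fun h => ⟨?_, ?_⟩, fun h y => (commute_iff.2 (by simp [h])).eq⟩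
  · simpa using commute_iff.1 (h ⟨0, 1, 0, 0, 0⟩)
  · simpa using (commute_iff.1 (h ⟨1, 0, 0, 0, 0⟩)).symm

def gen (i : Fin 4) : Model R :=
  ![⟨1, 0, 0, 0, 0⟩, ⟨0, 1, 0, 0, 0⟩, ⟨0, 0, 1, 0, 0⟩, ⟨0, 0, 0, 1, 0⟩] i

lemma gen_two_mem_center [Nontrivial R] : gen 2 ∈ Subgroup.center (Model R) :=
  mem_center_iff.2 ⟨rfl, rfl⟩

lemma gen_three_mem_center [Nontrivial R] : gen 3 ∈ Subgroup.center (Model R) :=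
  mem_center_iff.2 ⟨rfl, rfl⟩

def abMatrix (x y : Model R) : Matrix (Fin 2) (Fin 2) R := !![x.a, x.b; y.a, y.b]

def cdMatrix (x y : Model R) : Matrix (Fin 2) (Fin 2) R := !![x.c, x.d; y.c, y.d]

lemma commute_iff_det_abMatrix {x y : Model R} : Commute x y ↔ (abMatrix x y).det = 0 := by
  rw [commute_iff, abMatrix, Matrix.det_fin_two_of, sub_eq_zero, mul_comm x.a, eq_comm]

def pairEquiv : Model R × Model R ≃ Matrix (Fin 2) (Fin 2) R × ((R × R × R) × (R × R × R)) where
  toFun q := (abMatrix q.1 q.2, ((q.1.c, q.1.d, q.1.e), (q.2.c, q.2.d, q.2.e)))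
  invFun w := (⟨w.1 0 0, w.1 0 1, w.2.1.1, w.2.1.2.1, w.2.1.2.2⟩,
    ⟨w.1 1 0, w.1 1 1, w.2.2.1, w.2.2.2.1, w.2.2.2.2⟩)
  left_inv _ := rfl
  right_inv w := by
    obtain ⟨M, _⟩ := w
    rw [Matrix.eta_fin_two M]
    rfl

lemma card_commute_eq : Nat.card {q : Model R × Model R // Commute q.1 q.2} =
    Nat.card {M : Matrix (Fin 2) (Fin 2) R // M.det = 0} * Nat.card R ^ 6 := by
  rw [Nat.card_congr ((pairEquiv.subtypeEquiv (q := fun w => w.1.det = 0)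
    fun _ => commute_iff_det_abMatrix).trans
    (Equiv.prodSubtypeFstEquivSubtypeProd (p := fun M : Matrix (Fin 2) (Fin 2) R => M.det = 0)))]
  simp only [Nat.card_prod]
  ring

def linear (α β γ δ : R) : Model R →* Multiplicative R where
  toFun x := .ofAdd (α * x.a + β * x.b + γ * x.c + δ * x.d)
  map_one' := by simp
  map_mul' x y := by
    rw [← ofAdd_add]
    congr 1
    simp only [mul_a, mul_b, mul_c, mul_d]
    ring

lemma apply_gen_two_mem_center [Nontrivial R] (ψ : MulAut (Model R)) :
    ψ (gen 2) ∈ Subgroup.center (Model R) :=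
  (MulEquivClass.apply_mem_center_iff ψ).2 gen_two_mem_center

lemma apply_gen_three_mem_center [Nontrivial R] (ψ : MulAut (Model R)) :
    ψ (gen 3) ∈ Subgroup.center (Model R) :=
  (MulEquivClass.apply_mem_center_iff ψ).2 gen_three_mem_center

/-- `ψ` cannot kill the commutator `⁅gen 1, gen 0⁆`, whose image has this determinant as its
`e`-coordinate. -/
lemma det_abMatrix_ne_zero [Nontrivial R] (ψ : MulAut (Model R)) :
    (abMatrix (ψ (gen 0)) (ψ (gen 1))).det ≠ 0 := by
  intro h
  rw [abMatrix, Matrix.det_fin_two_of] at h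
  have hψ : ψ ⁅(gen 1 : Model R), gen 0⁆ = 1 := by
    rw [map_commutatorElement, commutatorElement_eq, Model.ext_iff]
    exact ⟨rfl, rfl, rfl, rfl, by rw [one_e]; linear_combination h⟩
  have h1 := congrArg e ((map_eq_one_iff ψ ψ.injective).1 hψ)
  simp [commutatorElement_eq, gen] at h1

end CommRing

/-- Commuting pairs are counted twice: as `k(M) * |M|`, and as the pairs whose `(a, b)`-parts
form a singular matrix. -/
lemma card_conjClasses {F : Type*} [Field F] [Fintype F] :
    Nat.card (ConjClasses (Model F)) = Nat.card F ^ 4 + Nat.card F ^ 3 - Nat.card F ^ 2 := by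
  classical
  have hq : 1 ≤ Nat.card F := Nat.card_pos
  have hsing : Nat.card {M : Matrix (Fin 2) (Fin 2) F // M.det = 0} + Nat.card (GL (Fin 2) F) =
      Nat.card F ^ 4 := by
    rw [Nat.card_congr (Matrix.GeneralLinearGroup.equivDetNeZero _ F), ← Nat.card_sum,
      Nat.card_congr (Equiv.sumCompl _)]
    simp only [Matrix, Nat.card_eq_fintype_card, Fintype.card_pi, Finset.prod_const,
      Finset.card_univ, Fintype.card_fin]
    ring
  have hcomm := card_comm_eq_card_conjClasses_mul_card (Model F)
  rw [card_commute_eq, natCard_eq] at hcomm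
  rw [Matrix.card_GL_fin_two] at hsing
  have h1 : 1 ≤ Nat.card F ^ 2 := Nat.one_le_pow _ _ hq
  have h2 : Nat.card F ≤ Nat.card F ^ 2 := Nat.le_self_pow two_ne_zero _
  have h3 : Nat.card F ^ 2 ≤ Nat.card F ^ 4 + Nat.card F ^ 3 :=
    (Nat.pow_le_pow_right hq (by norm_num)).trans (Nat.le_add_right _ _)
  refine Nat.eq_of_mul_eq_mul_right (pow_pos hq 5) ?_
  rw [← hcomm]
  zify [h1, h2, h3] at hsing ⊢
  linear_combination (Nat.card F : ℤ) ^ 6 * hsing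

lemma pow_prime_eq_one {p : ℕ} [Fact p.Prime] (hp2 : p ≠ 2) (x : Model (ZMod p)) : x ^ p = 1 := by
  have hp : p.Prime := Fact.out
  have hchoose : ((p.choose 2 : ℕ) : ZMod p) = 0 :=
    (ZMod.natCast_eq_zero_iff _ _).2
      (hp.dvd_choose_self two_ne_zero (lt_of_le_of_ne hp.two_le (Ne.symm hp2)))
  ext <;> simp [pow_eq, hchoose]

end Model

def rels : Set (FreeGroup (Fin 4)) :=
  {fgComm (FreeGroup.of (2 : Fin 4)) (FreeGroup.of (0 : Fin 4)),
    fgComm (FreeGroup.of (2 : Fin 4)) (FreeGroup.of (1 : Fin 4)),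
    fgComm (FreeGroup.of (3 : Fin 4)) (FreeGroup.of (0 : Fin 4)),
    fgComm (FreeGroup.of (3 : Fin 4)) (FreeGroup.of (1 : Fin 4)),
    fgComm (FreeGroup.of (3 : Fin 4)) (FreeGroup.of (2 : Fin 4))}

lemma lift_rels_eq_one {H : Type*} [Group H] {f : Fin 4 → H} (h2 : f 2 ∈ Subgroup.center H)
    (h3 : f 3 ∈ Subgroup.center H) : ∀ r ∈ rels, FreeGroup.lift f r = 1 := by
  rintro r (rfl | rfl | rfl | rfl | rfl) <;>
    simp only [ClassTwoGroup.map_fgComm, commutatorElement_eq_one_iff_commute,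
      FreeGroup.lift_apply_of, Commute.inv_inv_iff] <;>
    first
    | exact (Subgroup.mem_center_iff.1 h2 _).symm
    | exact (Subgroup.mem_center_iff.1 h3 _).symm

abbrev G (p : ℕ) : Type := ClassTwoGroup p 4 rels

namespace G

open ClassTwoGroup

variable {p : ℕ}

def z : G p := ⁅(of 1 : G p), of 0⁆

lemma of_two_mem_center : (of 2 : G p) ∈ Subgroup.center (G p) :=
  mem_center_of_forall_commute fun j => by
    fin_cases j
    · exact commute_of_fgComm_mem (by simp [rels])
    · exact commute_of_fgComm_mem (by simp [rels])
    · exact Commute.refl _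
    · exact (commute_of_fgComm_mem (by simp [rels])).symm

lemma of_three_mem_center : (of 3 : G p) ∈ Subgroup.center (G p) :=
  mem_center_of_forall_commute fun j => by
    fin_cases j
    · exact commute_of_fgComm_mem (by simp [rels])
    · exact commute_of_fgComm_mem (by simp [rels])
    · exact commute_of_fgComm_mem (by simp [rels])
    · exact Commute.refl _

lemma z_mem_center : (z : G p) ∈ Subgroup.center (G p) :=
  Subgroup.mem_center_iff.2 fun g => (commute_commutatorElement (of 1) (of 0) g).symm

lemma of_one_pow_mul_of_zero_pow (i j : ℕ) :
    (of 1 : G p) ^ j * of 0 ^ i = of 0 ^ i * of 1 ^ j * z ^ (j * i) :=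
  pow_mul_pow_eq_of_mul_eq z_mem_center
    (by rw [Subgroup.mem_center_iff.1 z_mem_center, z, commutatorElement_def]; group) i j

variable (p) in
def centralPart (k l m : ℕ) : Subgroup.center (G p) :=
  ⟨of 2, of_two_mem_center⟩ ^ k * ⟨of 3, of_three_mem_center⟩ ^ l * ⟨z, z_mem_center⟩ ^ m

def nf (i j k l m : ℕ) : G p := (of 0 : G p) ^ i * (of 1 : G p) ^ j * (centralPart p k l m : G p)

lemma nf_mul (i j k l m i' j' k' l' m' : ℕ) :
    (nf i j k l m * nf i' j' k' l' m' : G p) =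
      nf (i + i') (j + j') (k + k') (l + l') (m + m' + j * i') := by
  have hc : centralPart p (k + k') (l + l') (m + m' + j * i') =
      ⟨z, z_mem_center⟩ ^ (j * i') * (centralPart p k l m * centralPart p k' l' m') := by
    simp only [centralPart, pow_add]; ac_rfl
  have central : ∀ (c : Subgroup.center (G p)) (g : G p), (c : G p) * g = g * c := fun c g =>
    (Subgroup.mem_center_iff.1 c.2 g).symm
  have hw : ∀ g : G p, z ^ (j * i') * g = g * z ^ (j * i') := by
    simpa using central (⟨z, z_mem_center⟩ ^ (j * i'))
  calc nf i j k l m * nf i' j' k' l' m'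
      = of 0 ^ i * (of 1 ^ j * of 0 ^ i') * of 1 ^ j' *
          ((centralPart p k' l' m' : G p) * (centralPart p k l m : G p)) := by
        unfold nf; rw [mul_assoc (of 0 ^ i * of 1 ^ j), central]; group
    _ = of 0 ^ i * of 0 ^ i' * of 1 ^ j * (z ^ (j * i') * of 1 ^ j') *
          ((centralPart p k' l' m' : G p) * (centralPart p k l m : G p)) := by
      rw [of_one_pow_mul_of_zero_pow]; group
    _ = nf (i + i') (j + j') (k + k') (l + l') (m + m' + j * i') := by
      rw [hw]
      simp only [nf, hc, Subgroup.coe_mul, Subgroup.coe_pow, pow_add]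
      rw [central (centralPart p k l m)]
      group

variable (p) in
def nfSubmonoid : Submonoid (G p) where
  carrier := {g | ∃ i j k l m, g = nf i j k l m}
  one_mem' := ⟨0, 0, 0, 0, 0, by simp [nf, centralPart]⟩
  mul_mem' := by
    rintro _ _ ⟨i, j, k, l, m, rfl⟩ ⟨i', j', k', l', m', rfl⟩
    exact ⟨_, _, _, _, _, nf_mul i j k l m i' j' k' l' m'⟩

/-- Since the generators have finite order, the submonoid they generate is all of `G p`. -/
lemma exists_eq_nf [Fact p.Prime] (g : G p) : ∃ i j k l m, g = nf i j k l m := by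
  have hfin : ∀ x ∈ Set.range (of : Fin 4 → G p), IsOfFinOrder x := fun x _ =>
    isOfFinOrder_iff_pow_eq_one.2 ⟨p, (Fact.out : p.Prime).pos, pow_eq_one x⟩
  have hgen : Submonoid.closure (Set.range (of : Fin 4 → G p)) ≤ nfSubmonoid p := by
    refine Submonoid.closure_le.2 ?_
    rintro _ ⟨i, rfl⟩
    fin_cases i
    · exact ⟨1, 0, 0, 0, 0, by simp [nf, centralPart]⟩
    · exact ⟨0, 1, 0, 0, 0, by simp [nf, centralPart]⟩
    · exact ⟨0, 0, 1, 0, 0, by simp [nf, centralPart]⟩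
    · exact ⟨0, 0, 0, 1, 0, by simp [nf, centralPart]⟩
  refine hgen ?_
  rw [← Subgroup.closure_toSubmonoid_of_isOfFinOrder hfin, closure_range_of]
  trivial

variable [Fact p.Prime] [Fact (p ≠ 2)]

def toModel : G p →* Model (ZMod p) :=
  lift Model.gen (Model.pow_prime_eq_one Fact.out) Model.commute_commutatorElement
    (lift_rels_eq_one Model.gen_two_mem_center Model.gen_three_mem_center)

@[simp]
lemma toModel_of (i : Fin 4) : toModel (of i : G p) = Model.gen i :=
  lift_of _ _ _ _ i

lemma toModel_nf (i j k l m : ℕ) : toModel (nf i j k l m : G p) = ⟨i, j, k, l, m⟩ := by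
  ext <;> simp [nf, centralPart, z, Model.pow_eq, Model.commutatorElement_eq, Model.gen]

lemma toModel_bijective : Function.Bijective (toModel : G p → Model (ZMod p)) := by
  refine ⟨(injective_iff_map_eq_one _).2 fun g hg => ?_, fun y => ?_⟩
  · obtain ⟨i, j, k, l, m, rfl⟩ := exists_eq_nf g
    simp only [toModel_nf, Model.ext_iff, Model.one_a, Model.one_b, Model.one_c, Model.one_d,
      Model.one_e, ZMod.natCast_eq_zero_iff] at hg
    obtain ⟨⟨i, rfl⟩, ⟨j, rfl⟩, ⟨k, rfl⟩, ⟨l, rfl⟩, ⟨m, rfl⟩⟩ := hg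
    simp [nf, centralPart, pow_mul, pow_eq_one]
  · exact ⟨nf y.a.val y.b.val y.c.val y.d.val y.e.val, by simp [toModel_nf]⟩

variable (p) in
noncomputable def equivModel : G p ≃* Model (ZMod p) :=
  MulEquiv.ofBijective toModel toModel_bijective

end G

namespace Model

variable {p : ℕ} [Fact p.Prime] [Fact (p ≠ 2)]

lemma hom_ext {H : Type*} [Group H] {f g : Model (ZMod p) →* H} (h : ∀ i, f (gen i) = g (gen i)) :
    f = g :=
  (MonoidHom.cancel_right G.toModel_bijective.2).1
    (ClassTwoGroup.hom_ext fun i => by simpa using h i)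

lemma toAdd_apply_eq (l : Model (ZMod p) →* Multiplicative (ZMod p)) (x : Model (ZMod p)) :
    (l x).toAdd = x.a * (l (gen 0)).toAdd + x.b * (l (gen 1)).toAdd + x.c * (l (gen 2)).toAdd +
      x.d * (l (gen 3)).toAdd := by
  have hl : l = linear (l (gen 0)).toAdd (l (gen 1)).toAdd (l (gen 2)).toAdd (l (gen 3)).toAdd :=
    hom_ext fun i => by fin_cases i <;> simp [linear, gen]
  have h := congrArg Multiplicative.toAdd (DFunLike.congr_fun hl x)
  simp only [linear, MonoidHom.coe_mk, OneHom.coe_mk, toAdd_ofAdd] at h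
  rw [h]
  ring

lemma map_coords_eq (f : Model (ZMod p) →* Model (ZMod p)) (x : Model (ZMod p)) :
    (f x).a = x.a * (f (gen 0)).a + x.b * (f (gen 1)).a + x.c * (f (gen 2)).a +
      x.d * (f (gen 3)).a ∧
    (f x).b = x.a * (f (gen 0)).b + x.b * (f (gen 1)).b + x.c * (f (gen 2)).b +
      x.d * (f (gen 3)).b ∧
    (f x).c = x.a * (f (gen 0)).c + x.b * (f (gen 1)).c + x.c * (f (gen 2)).c +
      x.d * (f (gen 3)).c ∧
    (f x).d = x.a * (f (gen 0)).d + x.b * (f (gen 1)).d + x.c * (f (gen 2)).d +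
      x.d * (f (gen 3)).d := by
  refine ⟨?_, ?_, ?_, ?_⟩
  · simpa [linear] using toAdd_apply_eq ((linear 1 0 0 0).comp f) x
  · simpa [linear] using toAdd_apply_eq ((linear 0 1 0 0).comp f) x
  · simpa [linear] using toAdd_apply_eq ((linear 0 0 1 0).comp f) x
  · simpa [linear] using toAdd_apply_eq ((linear 0 0 0 1).comp f) x

/-- An element of the kernel has vanishing `(a, b)`- and then `(c, d)`-coordinates, so it is the
commutator `⁅(0, e, 0, 0, 0), gen 0⁆`, whose image has `e`-coordinate `e * det (abMatrix …)`. -/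
lemma injective_of_det_ne_zero {f : Model (ZMod p) →* Model (ZMod p)}
    (h2 : f (gen 2) ∈ Subgroup.center _) (h3 : f (gen 3) ∈ Subgroup.center _)
    (hab : (abMatrix (f (gen 0)) (f (gen 1))).det ≠ 0)
    (hcd : (cdMatrix (f (gen 2)) (f (gen 3))).det ≠ 0) :
    Function.Injective f := by
  rw [abMatrix, Matrix.det_fin_two_of] at hab
  rw [cdMatrix, Matrix.det_fin_two_of] at hcd
  obtain ⟨hCa, hCb⟩ := mem_center_iff.1 h2
  obtain ⟨hDa, hDb⟩ := mem_center_iff.1 h3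
  refine (injective_iff_map_eq_one f).2 fun x hx => ?_
  obtain ⟨ha, hb, hc, hd⟩ := map_coords_eq f x
  simp only [hx, one_a, one_b, one_c, one_d, hCa, hCb, hDa, hDb, mul_zero, add_zero] at ha hb hc hd
  obtain ⟨hxa, hxb⟩ := eq_zero_of_mul_add_mul_eq_zero hab ha.symm hb.symm
  simp only [hxa, hxb, zero_mul, zero_add] at hc hd
  obtain ⟨hxc, hxd⟩ := eq_zero_of_mul_add_mul_eq_zero hcd hc.symm hd.symm
  have hcomm : x = ⁅(⟨0, x.e, 0, 0, 0⟩ : Model (ZMod p)), gen 0⁆ := by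
    rw [commutatorElement_eq]
    ext <;> simp [gen, hxa, hxb, hxc, hxd]
  rw [hcomm, map_commutatorElement, commutatorElement_eq] at hx
  obtain ⟨ua, ub, -, -⟩ := map_coords_eq f ⟨0, x.e, 0, 0, 0⟩
  have he := congrArg e hx
  simp only [ua, ub, one_e, zero_mul, zero_add, add_zero] at he
  have hxe : x.e = 0 :=
    (mul_eq_zero.1 (by linear_combination he : x.e * _ = 0)).resolve_right hab
  ext <;> simp [hxa, hxb, hxc, hxd, hxe]

/-- `ψ⁻¹` preserves the centre, so every central `(0, 0, c, d, *)` is the image of a central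
element; hence the `(c, d)`-parts of `ψ (gen 2)` and `ψ (gen 3)` span. -/
lemma det_cdMatrix_ne_zero (ψ : MulAut (Model (ZMod p))) :
    (cdMatrix (ψ (gen 2)) (ψ (gen 3))).det ≠ 0 := by
  have hspan : ∀ y : Model (ZMod p), y.a = 0 → y.b = 0 →
      ∃ s t, s * (ψ (gen 2)).c + t * (ψ (gen 3)).c = y.c ∧
        s * (ψ (gen 2)).d + t * (ψ (gen 3)).d = y.d := by
    intro y ha hb
    obtain ⟨xa, xb⟩ := mem_center_iff.1 ((MulEquivClass.apply_mem_center_iff ψ).1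
      ((ψ.apply_symm_apply y).symm ▸ mem_center_iff.2 ⟨ha, hb⟩))
    obtain ⟨-, -, hc, hd⟩ := map_coords_eq ψ.toMonoidHom (ψ.symm y)
    simp only [MulEquiv.coe_toMonoidHom, MulEquiv.apply_symm_apply, xa, xb, zero_mul,
      zero_add] at hc hd
    exact ⟨_, _, hc.symm, hd.symm⟩
  obtain ⟨s, t, h1, -⟩ := hspan ⟨0, 0, 1, 0, 0⟩ rfl rfl
  obtain ⟨s', t', h2, h3⟩ := hspan ⟨0, 0, 0, 1, 0⟩ rfl rfl
  rw [cdMatrix, Matrix.det_fin_two_of]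
  exact det_ne_zero_of_mul_add_mul_eq h1 h2 h3

end Model

/-- An automorphism `ψ` of `M(𝔽_p)` is recorded by the matrices through which it acts on
`M / Z(M)` (`top`) and on `Z(M) / M'` (`bottom`), the `(c, d)`-parts of `ψ (gen 0)` and
`ψ (gen 1)` (`mixed`), and the `e`-coordinates of the four `ψ (gen i)` (`comm`). -/
@[ext]
structure AutData (p : ℕ) where
  top : GL (Fin 2) (ZMod p)
  mixed : Matrix (Fin 2) (Fin 2) (ZMod p)
  bottom : GL (Fin 2) (ZMod p)
  comm : Fin 4 → ZMod p

namespace AutData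

open Model

variable {p : ℕ}

def images (δ : AutData p) : Fin 4 → Model (ZMod p) :=
  ![⟨δ.top 0 0, δ.top 0 1, δ.mixed 0 0, δ.mixed 0 1, δ.comm 0⟩,
    ⟨δ.top 1 0, δ.top 1 1, δ.mixed 1 0, δ.mixed 1 1, δ.comm 1⟩,
    ⟨0, 0, δ.bottom 0 0, δ.bottom 0 1, δ.comm 2⟩,
    ⟨0, 0, δ.bottom 1 0, δ.bottom 1 1, δ.comm 3⟩]

lemma abMatrix_images (δ : AutData p) : abMatrix (δ.images 0) (δ.images 1) = δ.top :=
  (Matrix.eta_fin_two _).symm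

lemma cdMatrix_images (δ : AutData p) : cdMatrix (δ.images 2) (δ.images 3) = δ.bottom :=
  (Matrix.eta_fin_two _).symm

lemma natCard_eq : Nat.card (AutData p) = Nat.card (GL (Fin 2) (ZMod p)) ^ 2 * p ^ 8 := by
  rw [Nat.card_congr (⟨fun δ => (δ.top, δ.mixed, δ.bottom, δ.comm),
    fun v => ⟨v.1, v.2.1, v.2.2.1, v.2.2.2⟩, fun _ => rfl, fun _ => rfl⟩ : AutData p ≃ _)]
  simp only [Matrix, Nat.card_prod, Nat.card_fun, Nat.card_zmod, Nat.card_eq_fintype_card,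
    Fintype.card_fin]
  ring

variable [Fact p.Prime] [Fact (p ≠ 2)]

noncomputable def toEnd (δ : AutData p) : Model (ZMod p) →* Model (ZMod p) :=
  (ClassTwoGroup.lift δ.images (pow_prime_eq_one Fact.out) commute_commutatorElement
    (lift_rels_eq_one (mem_center_iff.2 ⟨rfl, rfl⟩) (mem_center_iff.2 ⟨rfl, rfl⟩))).comp
    (G.equivModel p).symm.toMonoidHom

lemma toEnd_gen (δ : AutData p) (i : Fin 4) : δ.toEnd (gen i) = δ.images i := by
  have : (G.equivModel p).symm (gen i) = ClassTwoGroup.of i :=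
    (MulEquiv.symm_apply_eq _).2 (G.toModel_of i).symm
  simp [toEnd, this]

lemma toEnd_bijective (δ : AutData p) : Function.Bijective δ.toEnd := by
  refine Finite.injective_iff_bijective.1 (injective_of_det_ne_zero ?_ ?_ ?_ ?_)
  · rw [toEnd_gen]; exact mem_center_iff.2 ⟨rfl, rfl⟩
  · rw [toEnd_gen]; exact mem_center_iff.2 ⟨rfl, rfl⟩
  · rw [toEnd_gen, toEnd_gen, abMatrix_images]; exact δ.top.det_ne_zero
  · rw [toEnd_gen, toEnd_gen, cdMatrix_images]; exact δ.bottom.det_ne_zero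

noncomputable def toMulAut (δ : AutData p) : MulAut (Model (ZMod p)) :=
  MulEquiv.ofBijective δ.toEnd δ.toEnd_bijective

lemma toMulAut_gen (δ : AutData p) (i : Fin 4) : δ.toMulAut (gen i) = δ.images i :=
  δ.toEnd_gen i

noncomputable def ofMulAut (ψ : MulAut (Model (ZMod p))) : AutData p where
  top := .mkOfDetNeZero _ (det_abMatrix_ne_zero ψ)
  mixed := !![(ψ (gen 0)).c, (ψ (gen 0)).d; (ψ (gen 1)).c, (ψ (gen 1)).d]
  bottom := .mkOfDetNeZero _ (det_cdMatrix_ne_zero ψ)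
  comm := ![(ψ (gen 0)).e, (ψ (gen 1)).e, (ψ (gen 2)).e, (ψ (gen 3)).e]

variable (p) in
noncomputable def equivMulAut : AutData p ≃ MulAut (Model (ZMod p)) where
  toFun := toMulAut
  invFun := ofMulAut
  left_inv δ := by
    ext i j <;> fin_cases i <;> try fin_cases j
    all_goals simp [ofMulAut, toMulAut_gen, images, abMatrix, cdMatrix]
  right_inv ψ := by
    obtain ⟨hCa, hCb⟩ := mem_center_iff.1 (apply_gen_two_mem_center ψ)
    obtain ⟨hDa, hDb⟩ := mem_center_iff.1 (apply_gen_three_mem_center ψ)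
    refine MulEquiv.toMonoidHom_injective (hom_ext fun i => ?_)
    fin_cases i <;>
      simp [ofMulAut, toMulAut_gen, images, abMatrix, cdMatrix, Model.ext_iff, hCa, hCb, hDa, hDb]

end AutData

end Group541

theorem group_5_4_1 (p : ℕ) (hp : p.Prime) (h5 : 5 ≤ p) :
    Nat.card (ConjClasses (ClassTwoGroup p 4 ({fgComm (FreeGroup.of (2 : Fin 4)) (FreeGroup.of (0 : Fin 4)), fgComm (FreeGroup.of (2 : Fin 4)) (FreeGroup.of (1 : Fin 4)), fgComm (FreeGroup.of (3 : Fin 4)) (FreeGroup.of (0 : Fin 4)), fgComm (FreeGroup.of (3 : Fin 4)) (FreeGroup.of (1 : Fin 4)), fgComm (FreeGroup.of (3 : Fin 4)) (FreeGroup.of (2 : Fin 4))} : Set (FreeGroup (Fin 4))))) = p ^ 4 + p ^ 3 - p ^ 2 ∧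
    Nat.card (MulAut (ClassTwoGroup p 4 ({fgComm (FreeGroup.of (2 : Fin 4)) (FreeGroup.of (0 : Fin 4)), fgComm (FreeGroup.of (2 : Fin 4)) (FreeGroup.of (1 : Fin 4)), fgComm (FreeGroup.of (3 : Fin 4)) (FreeGroup.of (0 : Fin 4)), fgComm (FreeGroup.of (3 : Fin 4)) (FreeGroup.of (1 : Fin 4)), fgComm (FreeGroup.of (3 : Fin 4)) (FreeGroup.of (2 : Fin 4))} : Set (FreeGroup (Fin 4))))) = (p ^ 2 - 1) ^ 2 * (p ^ 2 - p) ^ 2 * p ^ 8 := by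
  have : Fact p.Prime := ⟨hp⟩
  have : Fact (p ≠ 2) := ⟨by omega⟩
  have hconj : Nat.card (ConjClasses (Group541.G p)) = p ^ 4 + p ^ 3 - p ^ 2 := by
    rw [(Group541.G.equivModel p).natCard_conjClasses_eq, Group541.Model.card_conjClasses,
      Nat.card_zmod]
  have haut : Nat.card (MulAut (Group541.G p)) = (p ^ 2 - 1) ^ 2 * (p ^ 2 - p) ^ 2 * p ^ 8 := by
    rw [Nat.card_congr (MulAut.congr (Group541.G.equivModel p)).toEquiv,
      ← Nat.card_congr (Group541.AutData.equivMulAut p), Group541.AutData.natCard_eq,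
      Matrix.card_GL_fin_two, Nat.card_zmod]
    ring
  exact ⟨hconj, haut⟩
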